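/- There exists a continuous linear map T : ℓ²(ℕ, ℝ) → ℓ²(ℕ, ℝ) such that for all indices i, j, the inner product ⟨T e_j, e_i⟩ equals QNC(p_{i+1}, p_{j+1}) (matrix entries indexed from the first prime), where (e_k) is the standard orthonormal basis of ℓ²(ℕ, ℝ); moreover the operator norm of T is at most ∑_{i,j} |QNC(p_i, p_j)|. -/
import Mathlib


open Real
open scoped InnerProductSpace

/-- `F(x,y) = ∑_{k=1}^∞ x^{k-1} · y^{-x^k} / (1 - y^{-x^k})²`. -/
noncomputable def F (x y : ℝ) : ℝ :=
  ∑' k : ℕ, x ^ (k : ℝ) * y ^ (-(x ^ ((k : ℝ) + 1))) / (1 - y ^ (-(x ^ ((k : ℝ) + 1)))) ^ 2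

/-- `QNC(x,y) = (1/(12xy)) · ( x(y-1)F(x,y) - y(x-1)F(y,x) )`. -/
noncomputable def QNC (x y : ℝ) : ℝ :=
  1 / (12 * x * y) * (x * (y - 1) * F x y - y * (x - 1) * F y x)

/-- `nthPrime i` is the `(i+1)`-st prime, so `nthPrime 0 = 2`, `nthPrime 1 = 3`, ... -/
noncomputable def nthPrime (i : ℕ) : ℕ := Nat.nth Nat.Prime i



section
variable {x y : ℝ} (hx : 2 ≤ x) (hy : 2 ≤ y)

lemma two_mul_le_rpow (hx : 2 ≤ x) : 2 * x ≤ (2:ℝ) ^ x := by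
  have h1 : (2:ℝ) ^ x = 4 * 2 ^ (x - 2) := by
    have : (4:ℝ) = (2:ℝ) ^ (2:ℝ) := by
      rw [show (2:ℝ)^(2:ℝ) = 2^((2:ℕ):ℝ) by norm_num, Real.rpow_natCast]; norm_num
    rw [this, ← Real.rpow_add (by norm_num)]; ring_nf
  have h2 : (1:ℝ) + (x - 2) * Real.log 2 ≤ 2 ^ (x - 2) := by
    rw [Real.rpow_def_of_pos (by norm_num)]
    calc (1:ℝ) + (x-2) * Real.log 2 = 1 + (Real.log 2 * (x-2)) := by ring
    _ ≤ Real.exp (Real.log 2 * (x - 2)) := by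
        have := Real.add_one_le_exp (Real.log 2 * (x - 2)); linarith
  have hl2 : (1:ℝ)/2 ≤ Real.log 2 := by
    have := Real.log_two_gt_d9; linarith
  have hx2 : (0:ℝ) ≤ x - 2 := by linarith
  nlinarith [mul_le_mul_of_nonneg_left hl2 hx2]

-- the ratio r = x * y^(-x) is in [0, 1/2]
lemma ratio_le_half (hx : 2 ≤ x) (hy : 2 ≤ y) : x * y ^ (-x) ≤ 1/2 := by
  have hyx : (2:ℝ) ^ x ≤ y ^ x := Real.rpow_le_rpow (by norm_num) hy (by linarith)
  have h2x : 2 * x ≤ y ^ x := le_trans (two_mul_le_rpow hx) hyx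
  have hpos : (0:ℝ) < y ^ x := Real.rpow_pos_of_pos (by linarith) x
  rw [Real.rpow_neg (by linarith)]
  rw [mul_inv_le_iff₀ hpos]
  linarith

lemma t_pos (hy : 2 ≤ y) (e : ℝ) : 0 < y ^ (-e) := Real.rpow_pos_of_pos (by linarith) _

lemma t_le_quarter (hy : 2 ≤ y) {e : ℝ} (he : 2 ≤ e) : y ^ (-e) ≤ 1/4 := by
  have h1 : y ^ (-e) ≤ y ^ (-(2:ℝ)) :=
    Real.rpow_le_rpow_of_exponent_le (by linarith) (by linarith)
  have h2 : y ^ (-(2:ℝ)) ≤ 1/4 := by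
    rw [Real.rpow_neg (by linarith), show ((2:ℝ) = ((2:ℕ):ℝ)) by norm_num,
      Real.rpow_natCast]
    rw [show (1:ℝ)/4 = ((2:ℝ)^(2:ℕ))⁻¹ by norm_num]
    exact inv_anti₀ (by norm_num) (by nlinarith)
  linarith

include hx in
lemma exp_ge (k : ℕ) : 2 ≤ x ^ ((k:ℝ) + 1) := by
  calc (2:ℝ) ≤ x := hx
  _ = x ^ (1:ℝ) := (Real.rpow_one x).symm
  _ ≤ x ^ ((k:ℝ)+1) := Real.rpow_le_rpow_of_exponent_le (by linarith)
      (by have : (0:ℝ) ≤ (k:ℝ) := Nat.cast_nonneg k; linarith)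

include hx in
lemma xk_ge (k : ℕ) : x * ((k:ℝ)+1) ≤ x ^ ((k:ℝ)+1) := by
  have h1 : ((k:ℝ)+1) ≤ 2 ^ (k:ℝ) := by
    rw [show ((2:ℝ) ^ (k:ℝ)) = ((2:ℝ) ^ (k:ℕ)) by rw [Real.rpow_natCast]]
    induction k with
    | zero => norm_num
    | succ n ih =>
      push_cast; push_cast at ih; rw [pow_succ]
      nlinarith [pow_pos (show (0:ℝ)<2 by norm_num) n]
  have h2 : (2:ℝ) ^ (k:ℝ) ≤ x ^ (k:ℝ) := Real.rpow_le_rpow (by norm_num) hx (by positivity)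
  have h3 : x ^ ((k:ℝ)+1) = x ^ (k:ℝ) * x := by
    rw [Real.rpow_add (by linarith), Real.rpow_one]
  rw [h3]
  have hx0 : (0:ℝ) ≤ x := by linarith
  nlinarith [Real.rpow_pos_of_pos (show (0:ℝ)<2 by norm_num) (k:ℝ), Nat.cast_nonneg (α := ℝ) k]

include hx hy in
lemma term_nonneg (k : ℕ) :
    0 ≤ x ^ (k : ℝ) * y ^ (-(x ^ ((k : ℝ) + 1))) / (1 - y ^ (-(x ^ ((k : ℝ) + 1)))) ^ 2 := by
  have := t_le_quarter hy (exp_ge hx k)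
  have := t_pos hy (x ^ ((k:ℝ)+1))
  positivity

include hx hy in
lemma term_le (k : ℕ) :
    x ^ (k : ℝ) * y ^ (-(x ^ ((k : ℝ) + 1))) / (1 - y ^ (-(x ^ ((k : ℝ) + 1)))) ^ 2
      ≤ (32/9) * y ^ (-x) * (1/2) ^ k := by
  set t := y ^ (-(x ^ ((k:ℝ)+1))) with ht
  have htq : t ≤ 1/4 := t_le_quarter hy (exp_ge hx k)
  have htp : 0 < t := t_pos hy _
  have hden : (9:ℝ)/16 ≤ (1 - t)^2 := by nlinarith
  have hxk : (0:ℝ) < x ^ (k:ℝ) := Real.rpow_pos_of_pos (by linarith) _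
  -- t ≤ (y^(-x))^(k+1)
  have hstep : t ≤ (y ^ (-x)) ^ (k+1 : ℕ) := by
    have h1 : t ≤ y ^ (-(x * ((k:ℝ)+1))) := by
      rw [ht]
      exact Real.rpow_le_rpow_of_exponent_le (by linarith) (by linarith [xk_ge hx k])
    have h2 : y ^ (-(x * ((k:ℝ)+1))) = (y ^ (-x)) ^ (k+1 : ℕ) := by
      rw [show -(x * ((k:ℝ)+1)) = (-x) * ((k:ℝ)+1) by ring,
        Real.rpow_mul (by linarith), show ((k:ℝ)+1) = ((k+1 : ℕ):ℝ) by push_cast; ring,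
        Real.rpow_natCast]
    rw [h2] at h1; exact h1
  have hr : x * y ^ (-x) ≤ 1/2 := ratio_le_half hx hy
  have hyx : 0 < y ^ (-x) := Real.rpow_pos_of_pos (by linarith) _
  have key : x ^ (k:ℝ) * t ≤ 2 * y ^ (-x) * (1/2)^k := by
    calc x ^ (k:ℝ) * t ≤ x ^ (k:ℝ) * (y ^ (-x)) ^ (k+1:ℕ) := by
          exact mul_le_mul_of_nonneg_left hstep (le_of_lt hxk)
    _ = y ^ (-x) * (x * y ^ (-x)) ^ k := by
        rw [Real.rpow_natCast x k, pow_succ, mul_pow]; ring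
    _ ≤ y ^ (-x) * (1/2) ^ k := by
        refine mul_le_mul_of_nonneg_left (pow_le_pow_left₀ ?_ hr k) (le_of_lt hyx)
        positivity
    _ ≤ 2 * y ^ (-x) * (1/2)^k := by nlinarith [pow_pos (show (0:ℝ)<1/2 by norm_num) k]
  rw [div_le_iff₀ (by positivity)]
  calc x ^ (k:ℝ) * t ≤ 2 * y ^ (-x) * (1/2)^k := key
  _ ≤ (32/9 * y ^ (-x) * (1/2)^k) * (9/16) := by
      nlinarith [pow_pos (show (0:ℝ)<1/2 by norm_num) k]
  _ ≤ (32/9 * y ^ (-x) * (1/2)^k) * (1-t)^2 := by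
      refine mul_le_mul_of_nonneg_left hden ?_
      positivity

include hx hy in
lemma F_nonneg : 0 ≤ F x y := tsum_nonneg (term_nonneg hx hy)

include hx hy in
lemma F_le : F x y ≤ 8 * y ^ (-x) := by
  have hyx : 0 < y ^ (-x) := Real.rpow_pos_of_pos (by linarith) _
  have hgeo : Summable (fun k : ℕ => (32/9) * y ^ (-x) * (1/2:ℝ) ^ k) :=
    (summable_geometric_of_lt_one (by norm_num) (by norm_num)).mul_left _
  have hsum : Summable (fun k : ℕ =>
      x ^ (k : ℝ) * y ^ (-(x ^ ((k : ℝ) + 1))) / (1 - y ^ (-(x ^ ((k : ℝ) + 1)))) ^ 2) :=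
    Summable.of_nonneg_of_le (term_nonneg hx hy) (term_le hx hy) hgeo
  calc F x y ≤ ∑' k : ℕ, (32/9) * y ^ (-x) * (1/2:ℝ) ^ k :=
        Summable.tsum_le_tsum (term_le hx hy) hsum hgeo
  _ = (32/9) * y ^ (-x) * ∑' k : ℕ, (1/2:ℝ) ^ k := by rw [tsum_mul_left]
  _ = (32/9) * y ^ (-x) * 2 := by
      rw [tsum_geometric_of_lt_one (by norm_num) (by norm_num)]; norm_num
  _ ≤ 8 * y ^ (-x) := by nlinarith

end

section
variable {x y : ℝ}

lemma abs_QNC_le (hx : 2 ≤ x) (hy : 2 ≤ y) :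
    |QNC x y| ≤ y ^ (-x) + x ^ (-y) := by
  have h1 := F_nonneg hx hy
  have h2 := F_nonneg hy hx
  have h3 := F_le hx hy
  have h4 := F_le hy hx
  have hxy : (0:ℝ) < 12 * x * y := by nlinarith
  have hyx : (0:ℝ) < y ^ (-x) := Real.rpow_pos_of_pos (by linarith) _
  have hxy' : (0:ℝ) < x ^ (-y) := Real.rpow_pos_of_pos (by linarith) _
  rw [QNC, abs_mul, abs_of_pos (by positivity : (0:ℝ) < 1 / (12 * x * y))]
  have hb : |x * (y - 1) * F x y - y * (x - 1) * F y x|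
      ≤ x * y * F x y + y * x * F y x := by
    have e1 : x*(y-1)*F x y ≤ x*y*F x y := mul_le_mul_of_nonneg_right (by nlinarith) h1
    have e2 : y*(x-1)*F y x ≤ y*x*F y x := mul_le_mul_of_nonneg_right (by nlinarith) h2
    have e3 : 0 ≤ y*(x-1)*F y x := mul_nonneg (mul_nonneg (by linarith) (by linarith)) h2
    have e4 : 0 ≤ x*(y-1)*F x y := mul_nonneg (mul_nonneg (by linarith) (by linarith)) h1
    rw [abs_sub_le_iff]
    constructor <;> linarith
  calc 1 / (12 * x * y) * |x * (y - 1) * F x y - y * (x - 1) * F y x|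
      ≤ 1 / (12 * x * y) * (x * y * F x y + y * x * F y x) :=
        mul_le_mul_of_nonneg_left hb (by positivity)
  _ = (F x y + F y x) / 12 := by field_simp
  _ ≤ (8 * y ^ (-x) + 8 * x ^ (-y)) / 12 := by linarith
  _ ≤ y ^ (-x) + x ^ (-y) := by linarith

-- q^(-p) ≤ 4 * 2^(-p) * q^(-2)
lemma rpow_split (hx : 2 ≤ x) (hy : 2 ≤ y) :
    y ^ (-x) ≤ 4 * 2 ^ (-x) * y ^ (-(2:ℝ)) := by
  have hy0 : (0:ℝ) < y := by linarith
  have h1 : y ^ (-x) = y ^ (-(x-2)) * y ^ (-(2:ℝ)) := by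
    rw [← Real.rpow_add hy0]; ring_nf
  have h2 : y ^ (-(x-2)) ≤ 2 ^ (-(x-2)) := by
    rw [Real.rpow_neg (by linarith), Real.rpow_neg (by norm_num)]
    exact inv_anti₀ (Real.rpow_pos_of_pos (by norm_num) _)
      (Real.rpow_le_rpow (by norm_num) hy (by linarith))
  have h3 : (2:ℝ) ^ (-(x-2)) = 4 * 2 ^ (-x) := by
    rw [show -(x-2) = -x + 2 by ring, Real.rpow_add (by norm_num)]
    rw [show (2:ℝ)^(2:ℝ) = 2^((2:ℕ):ℝ) by norm_num, Real.rpow_natCast]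
    ring_nf
  have h4 : (0:ℝ) < y ^ (-(2:ℝ)) := Real.rpow_pos_of_pos hy0 _
  calc y ^ (-x) = y ^ (-(x-2)) * y ^ (-(2:ℝ)) := h1
  _ ≤ 2 ^ (-(x-2)) * y ^ (-(2:ℝ)) := mul_le_mul_of_nonneg_right h2 (le_of_lt h4)
  _ = 4 * 2 ^ (-x) * y ^ (-(2:ℝ)) := by rw [h3]

lemma nthPrime_ge (i : ℕ) : i + 2 ≤ nthPrime i := Nat.add_two_le_nth_prime i

lemma two_le_nthPrime (i : ℕ) : (2:ℝ) ≤ (nthPrime i : ℝ) := by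
  have := nthPrime_ge i; exact_mod_cast le_trans (by omega) this

-- the dominating summable function
noncomputable def dom (ij : ℕ × ℕ) : ℝ :=
  4 * ((1/2:ℝ) ^ ij.1 * ((1:ℝ)/((ij.2:ℝ)+2)^2) + (1/2:ℝ) ^ ij.2 * ((1:ℝ)/((ij.1:ℝ)+2)^2))

set_option maxHeartbeats 2000000 in
lemma summable_dom : Summable dom := by
  have hg : Summable (fun n : ℕ => (1/2:ℝ) ^ n) :=
    summable_geometric_of_lt_one (by norm_num) (by norm_num)
  have hp : Summable (fun n : ℕ => (1:ℝ)/((n:ℝ)+2)^2) := by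
    have h0 : Summable (fun n : ℕ => (1:ℝ)/(n:ℝ)^(2:ℕ)) :=
      Real.summable_one_div_nat_pow.mpr (by norm_num)
    have h1 := h0.comp_injective
      (fun a b h => by simpa using h : Function.Injective (fun n : ℕ => n + 2))
    refine h1.congr fun n => ?_
    simp only [Function.comp]; push_cast; ring
  have h1 : Summable (fun ij : ℕ × ℕ => (1/2:ℝ) ^ ij.1 * ((1:ℝ)/((ij.2:ℝ)+2)^2)) :=
    hg.mul_of_nonneg hp (fun n => by positivity) (fun n => by positivity)
  have h2 : Summable (fun ij : ℕ × ℕ => (1/2:ℝ) ^ ij.2 * ((1:ℝ)/((ij.1:ℝ)+2)^2)) :=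
    (hp.mul_of_nonneg hg (fun n => by positivity) (fun n => by positivity)).congr
      fun ij => mul_comm _ _
  exact ((h1.add h2).mul_left 4).congr fun ij => by simp only [dom]

lemma abs_QNC_prime_le (i j : ℕ) :
    |QNC (nthPrime i : ℝ) (nthPrime j : ℝ)| ≤ dom (i, j) := by
  have hp : 2 ≤ (nthPrime i : ℝ) := two_le_nthPrime i
  have hq : 2 ≤ (nthPrime j : ℝ) := two_le_nthPrime j
  have key : ∀ (a b : ℝ) (m n : ℕ), 2 ≤ a → 2 ≤ b → ((m:ℝ) + 2) ≤ a → ((n:ℝ)+2) ≤ b →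
      b ^ (-a) ≤ 4 * ((1/2:ℝ)^m * ((1:ℝ)/((n:ℝ)+2)^2)) := by
    intro a b m n ha hb hma hnb
    have h1 : b ^ (-a) ≤ 4 * 2 ^ (-a) * b ^ (-(2:ℝ)) := rpow_split ha hb
    have h2 : (2:ℝ) ^ (-a) ≤ 2 ^ (-(m:ℝ)) :=
      Real.rpow_le_rpow_of_exponent_le (by norm_num) (by linarith)
    have h2' : (2:ℝ) ^ (-(m:ℝ)) = (1/2:ℝ)^m := by
      rw [Real.rpow_neg (by norm_num), Real.rpow_natCast]
      simp [one_div, inv_pow]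
    have h3 : b ^ (-(2:ℝ)) ≤ (1:ℝ)/((n:ℝ)+2)^2 := by
      rw [Real.rpow_neg (by linarith), Real.rpow_two, one_div]
      exact inv_anti₀ (by positivity) (by nlinarith)
    have hb2 : (0:ℝ) < b ^ (-(2:ℝ)) := Real.rpow_pos_of_pos (by linarith) _
    have h2p : (0:ℝ) < (2:ℝ) ^ (-a) := Real.rpow_pos_of_pos (by norm_num) _
    calc b ^ (-a) ≤ 4 * 2 ^ (-a) * b ^ (-(2:ℝ)) := h1
    _ ≤ 4 * (1/2:ℝ)^m * ((1:ℝ)/((n:ℝ)+2)^2) := by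
        rw [← h2']
        have hq1 : (0:ℝ) < (2:ℝ)^(-(m:ℝ)) := Real.rpow_pos_of_pos (by norm_num) _
        have hq2 : (0:ℝ) ≤ (1:ℝ)/((n:ℝ)+2)^2 := by positivity
        nlinarith
    _ = 4 * ((1/2:ℝ)^m * ((1:ℝ)/((n:ℝ)+2)^2)) := by ring
  have hpi : ((i:ℝ)+2) ≤ (nthPrime i : ℝ) := by
    have h := nthPrime_ge i
    have h' : ((i+2:ℕ):ℝ) ≤ (nthPrime i : ℝ) := by exact_mod_cast h
    push_cast at h'; linarith
  have hqj : ((j:ℝ)+2) ≤ (nthPrime j : ℝ) := by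
    have h := nthPrime_ge j
    have h' : ((j+2:ℕ):ℝ) ≤ (nthPrime j : ℝ) := by exact_mod_cast h
    push_cast at h'; linarith
  have hA := key _ _ i j hp hq hpi hqj
  have hB := key _ _ j i hq hp hqj hpi
  have := abs_QNC_le hp hq
  simp only [dom]
  linarith

lemma summable_absQNC :
    Summable (fun ij : ℕ × ℕ => |QNC (nthPrime ij.1 : ℝ) (nthPrime ij.2 : ℝ)|) :=
  Summable.of_nonneg_of_le (fun ij => abs_nonneg _)
    (fun ij => abs_QNC_prime_le ij.1 ij.2) summable_dom

end

noncomputable abbrev H := lp (fun _ : ℕ => ℝ) 2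

noncomputable def e (i : ℕ) : H := lp.single 2 i (1 : ℝ)

lemma inner_e (k i : ℕ) : ⟪e k, e i⟫_ℝ = if k = i then (1:ℝ) else 0 := by
  rw [e, e, lp.inner_single_left]
  simp only [RCLike.inner_apply, conj_trivial, one_mul, lp.single_apply, Pi.single_apply]
  by_cases h : k = i <;> simp [h]

set_option maxHeartbeats 1000000 in
private 
theorem general_op (a : ℕ × ℕ → ℝ) (ha : Summable (fun ij => |a ij|)) :
    ∃ T : H →L[ℝ] H,
      (∀ i j : ℕ, ⟪T (e j), e i⟫_ℝ = a (i, j)) ∧ ‖T‖ ≤ ∑' ij : ℕ × ℕ, |a ij| := by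
  set R : ℕ × ℕ → (H →L[ℝ] H) :=
    fun ij => a ij • ((innerSL ℝ (e ij.2)).smulRight (e ij.1)) with hRdef
  have norm_e : ∀ i, ‖e i‖ = 1 := by
    intro i
    have h := inner_e i i
    rw [if_pos rfl] at h
    have h2 := real_inner_self_eq_norm_sq (e i)
    nlinarith [norm_nonneg (e i)]
  have hnorm : ∀ ij, ‖R ij‖ = |a ij| := by
    intro ij
    simp only [hRdef]
    have hs := norm_smul (a ij) (((innerSL ℝ (e ij.2)).smulRight (e ij.1)) : H →L[ℝ] H)
    rw [hs, ContinuousLinearMap.norm_smulRight_apply, innerSL_apply_norm,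
      norm_e, norm_e, Real.norm_eq_abs]
    ring
  have hRsum : Summable R := by
    apply Summable.of_norm
    simpa only [hnorm] using ha
  refine ⟨∑' ij, R ij, fun i j => ?_, ?_⟩
  · have h1 : HasSum (fun ij => (ContinuousLinearMap.apply ℝ H (e j)) (R ij))
        ((ContinuousLinearMap.apply ℝ H (e j)) (∑' ij, R ij)) :=
      hRsum.hasSum.mapL _
    simp only [ContinuousLinearMap.apply_apply] at h1
    have h2 : HasSum (fun ij => (innerSL ℝ (e i)) (R ij (e j)))
        ((innerSL ℝ (e i)) ((∑' ij, R ij) (e j))) := h1.mapL _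
    simp only [innerSL_apply_apply] at h2
    have h4 : (fun ij : ℕ × ℕ => ⟪e i, R ij (e j)⟫_ℝ)
        = fun ij => if ij = (i, j) then a (i, j) else 0 := by
      funext ij
      have hR : R ij (e j) = a ij • (⟪e ij.2, e j⟫_ℝ • e ij.1) := by
        simp only [hRdef, ContinuousLinearMap.smul_apply,
          ContinuousLinearMap.smulRight_apply, innerSL_apply_apply]
      rw [hR, real_inner_smul_right, real_inner_smul_right, inner_e, inner_e]
      by_cases h5 : ij = (i, j)
      · subst h5; simp
      · rw [if_neg h5]
        by_cases h6 : ij.1 = i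
        · have h7 : ij.2 ≠ j := fun h7 => h5 (Prod.ext h6 h7)
          simp [h7]
        · simp only [mul_ite, mul_one, mul_zero, ite_eq_right_iff]
          exact fun h _ => absurd h.symm h6
    rw [h4] at h2
    have h8 := (hasSum_ite_eq (i, j) (a (i, j))).unique h2
    rw [real_inner_comm]
    exact h8.symm
  · calc ‖∑' ij, R ij‖ ≤ ∑' ij, ‖R ij‖ :=
        norm_tsum_le_tsum_norm (by simpa only [hnorm] using ha)
    _ = ∑' ij, |a ij| := tsum_congr hnorm


/-- There is a continuous linear map `T : ℓ²(ℕ,ℝ) → ℓ²(ℕ,ℝ)` whose matrix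
entries with respect to the standard orthonormal basis are `⟨T e_j, e_i⟩ = QNC(p_{i+1}, p_{j+1})`,
and whose operator norm is at most `∑_{i,j} |QNC(p_i, p_j)|`. -/
theorem exists_operator_R :
    ∃ T : lp (fun _ : ℕ => ℝ) 2 →L[ℝ] lp (fun _ : ℕ => ℝ) 2,
      (∀ i j : ℕ,
        ⟪T (lp.single 2 j (1 : ℝ)), lp.single 2 i (1 : ℝ)⟫_ℝ =
          QNC (nthPrime i : ℝ) (nthPrime j : ℝ)) ∧
      ‖T‖ ≤ ∑' ij : ℕ × ℕ, |QNC (nthPrime ij.1 : ℝ) (nthPrime ij.2 : ℝ)| := by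
  obtain ⟨T, hT, hnorm⟩ := general_op
    (fun ij : ℕ × ℕ => QNC (nthPrime ij.1 : ℝ) (nthPrime ij.2 : ℝ)) summable_absQNC
  exact ⟨T, fun i j => hT i j, hnorm⟩
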